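/- arXiv:2602.03206 — 3 statements merged into one kernel-verified Lean document; each statement's English description precedes it below -/
import Mathlib

section
/- Let L be a Dedekind complete unital f-algebra and let λ ∈ L. Then there exists a sequence of idempotents π_n in L with π_n increasing to 1 (in the order of L) such that −n·1 ≤ π_n·λ ≤ n·1 for all n ∈ ℕ. Moreover, if λ ≥ 0, then π_n·λ increases to λ. -/
/-!
Write `m = |λ|` and `uₙ = (n - m)⁺`, and let `πₙ = sup_k (k uₙ ⊓ 1)` be the component of `1` in
the band generated by `uₙ`; the supremum exists by Dedekind completeness. By the Archimedean
property, which also follows from Dedekind completeness, `1 - πₙ` is disjoint from `uₙ`, and by infinite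
distributivity `πₙ` is disjoint from everything disjoint from `uₙ`. In an `f`-algebra an element
below `1` multiplies to zero anything it is disjoint from, so `πₙ (1 - πₙ) = 0` and
`πₙ (n - m)⁻ = 0`; the latter gives `πₙ m ≤ πₙ n ≤ n`. Finally, for `x ≥ 0` any upper bound `b` of
the `πₙ x` leaves a remainder `x - b ⊓ x ≤ x (1 - πₙ)` disjoint from every `uₙ`, and such an
element vanishes, again by the Archimedean property.
-/

/-- A Dedekind complete unital `f`-algebra over the reals. -/
class DFAlgebra (L : Type*) extends CommRing L, Lattice L, Algebra ℝ L where
  add_le_add_left : ∀ a b : L, a ≤ b → ∀ c : L, c + a ≤ c + b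
  mul_nonneg : ∀ a b : L, 0 ≤ a → 0 ≤ b → 0 ≤ a * b
  f_prop : ∀ a b c : L, a ⊓ b = 0 → 0 ≤ c → (c * a) ⊓ b = 0
  algebraMap_nonneg : ∀ r : ℝ, 0 ≤ r → 0 ≤ Algebra.algebraMap ℝ L r
  dedekind : ∀ S : Set L, S.Nonempty → BddAbove S → ∃ a : L, IsLUB S a

/-- A partially ordered `L`-module. -/
class POModule (L : Type*) [DFAlgebra L] (X : Type*) extends
    AddCommGroup X, Module L X, PartialOrder X where
  add_le_add_left : ∀ a b : X, a ≤ b → ∀ c : X, c + a ≤ c + b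
  smul_le_smul : ∀ l : L, 0 ≤ l → ∀ a b : X, a ≤ b → l • a ≤ l • b

section LatticeOrderedGroup

variable {α : Type*} [AddCommGroup α] [Lattice α] [IsOrderedAddMonoid α]

theorem add_inf_le_inf_add_inf {a b c : α} (ha : 0 ≤ a) (hb : 0 ≤ b) (hc : 0 ≤ c) :
    (a + b) ⊓ c ≤ a ⊓ c + b ⊓ c := by
  rw [inf_add, add_inf, add_inf]
  refine le_inf (le_inf inf_le_left ?_) (le_inf ?_ ?_)
  · exact inf_le_right.trans (le_add_of_nonneg_left ha)
  · exact inf_le_right.trans (le_add_of_nonneg_right hb)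
  · exact inf_le_right.trans (le_add_of_nonneg_left hc)

theorem nsmul_inf_eq_zero {a c : α} (ha : 0 ≤ a) (hc : 0 ≤ c) (h : a ⊓ c = 0) (n : ℕ) :
    n • a ⊓ c = 0 := by
  induction n with
  | zero => rw [zero_nsmul, inf_of_le_left hc]
  | succ n ih =>
    refine le_antisymm ?_ (le_inf (nsmul_nonneg ha _) hc)
    calc (n + 1) • a ⊓ c ≤ n • a ⊓ c + a ⊓ c := by
          rw [succ_nsmul]; exact add_inf_le_inf_add_inf (nsmul_nonneg ha n) ha hc
      _ = 0 := by rw [ih, h, add_zero]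

theorem IsLUB.inf_nonpos {S : Set α} {t c : α} (ht : IsLUB S t) (h : ∀ s ∈ S, s ⊓ c ≤ 0) :
    t ⊓ c ≤ 0 := by
  have hS : ∀ s ∈ S, s ≤ t ⊔ c - c := fun s hs => by
    rw [le_sub_iff_add_le, ← inf_add_sup s c]
    simpa using add_le_add (h s hs) (sup_le_sup_right (ht.1 hs) c)
  have := le_sub_iff_add_le.1 (ht.2 hS)
  rwa [← inf_add_sup t c, add_le_iff_nonpos_left] at this

end LatticeOrderedGroup

section FAlgebra

variable {L : Type*} [DFAlgebra L]

instance : IsOrderedAddMonoid L where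
  add_le_add_left a b h c := by
    simpa only [add_comm _ c] using DFAlgebra.add_le_add_left a b h c

instance : ZeroLEOneClass L where
  zero_le_one := by simpa using DFAlgebra.algebraMap_nonneg (L := L) 1 zero_le_one

instance : IsOrderedRing L := .of_mul_nonneg DFAlgebra.mul_nonneg

theorem eq_zero_of_nsmul_le {w b : L} (hw : 0 ≤ w) (h : ∀ n : ℕ, n • w ≤ b) : w = 0 := by
  obtain ⟨s, hs⟩ := DFAlgebra.dedekind (Set.range fun n : ℕ => n • w)
    ⟨0, 0, zero_nsmul w⟩ ⟨b, Set.forall_mem_range.2 h⟩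
  have hsw : s ≤ s - w := hs.2 <| Set.forall_mem_range.2 fun n =>
    le_sub_iff_add_le.2 (by simpa only [succ_nsmul] using hs.1 ⟨n + 1, rfl⟩)
  exact le_antisymm (by simpa using le_sub_iff_add_le.1 hsw) hw

theorem eq_zero_of_inf_one_eq_zero {c : L} (hc : 0 ≤ c) (h : c ⊓ 1 = 0) : c = 0 := by
  simpa using DFAlgebra.f_prop 1 c c (by rwa [inf_comm]) hc

theorem mul_eq_zero_of_inf_eq_zero {a c : L} (ha : a ≤ 1) (hc : 0 ≤ c) (h : a ⊓ c = 0) : a * c = 0 := by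
  have hca : c * a ≤ c := (mul_le_mul_of_nonneg_left ha hc).trans_eq (mul_one c)
  rw [mul_comm, ← inf_of_le_left hca]
  exact DFAlgebra.f_prop a c c h hc

theorem exists_isLUB_nsmul_inf_one (u : L) :
    ∃ p : L, IsLUB (Set.range fun k : ℕ => k • u ⊓ 1) p :=
  DFAlgebra.dedekind _ ⟨_, 0, rfl⟩ ⟨1, Set.forall_mem_range.2 fun _ => inf_le_right⟩

noncomputable def bandProj (u : L) : L := (exists_isLUB_nsmul_inf_one u).choose

theorem isLUB_bandProj (u : L) : IsLUB (Set.range fun k : ℕ => k • u ⊓ 1) (bandProj u) :=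
  (exists_isLUB_nsmul_inf_one u).choose_spec

theorem bandProj_le_one (u : L) : bandProj u ≤ 1 :=
  (isLUB_bandProj u).2 (Set.forall_mem_range.2 fun _ => inf_le_right)

theorem bandProj_nonneg (u : L) : 0 ≤ bandProj u := by
  simpa using (isLUB_bandProj u).1 ⟨0, rfl⟩

theorem bandProj_mono {u v : L} (h : u ≤ v) : bandProj u ≤ bandProj v :=
  (isLUB_bandProj u).2 <| Set.forall_mem_range.2 fun k =>
    (inf_le_inf_right 1 (nsmul_le_nsmul_right h k)).trans ((isLUB_bandProj v).1 ⟨k, rfl⟩)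

theorem one_sub_bandProj_inf_eq_zero {u : L} (hu : 0 ≤ u) : (1 - bandProj u) ⊓ u = 0 := by
  set w := (1 - bandProj u) ⊓ u
  have hw : 0 ≤ w := le_inf (sub_nonneg.2 (bandProj_le_one u)) hu
  refine eq_zero_of_nsmul_le hw (b := 1) fun k => ?_
  induction k with
  | zero => simp
  | succ k ih =>
    have hk : k • w ≤ bandProj u := calc
      k • w = k • w ⊓ 1 := (inf_of_le_left ih).symm
      _ ≤ k • u ⊓ 1 := inf_le_inf_right 1 (nsmul_le_nsmul_right inf_le_right k)
      _ ≤ bandProj u := (isLUB_bandProj u).1 ⟨k, rfl⟩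
    calc (k + 1) • w = k • w + w := succ_nsmul w k
      _ ≤ bandProj u + (1 - bandProj u) := add_le_add hk inf_le_left
      _ = 1 := add_sub_cancel _ _

theorem bandProj_inf_eq_zero {u c : L} (hu : 0 ≤ u) (hc : 0 ≤ c) (h : u ⊓ c = 0) :
    bandProj u ⊓ c = 0 :=
  le_antisymm
    ((isLUB_bandProj u).inf_nonpos <| Set.forall_mem_range.2 fun k =>
      (inf_le_inf_right c inf_le_left).trans (nsmul_inf_eq_zero hu hc h k).le)
    (le_inf (bandProj_nonneg u) hc)

theorem bandProj_mul_eq_zero {u c : L} (hu : 0 ≤ u) (hc : 0 ≤ c) (h : u ⊓ c = 0) :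
    bandProj u * c = 0 :=
  mul_eq_zero_of_inf_eq_zero (bandProj_le_one u) hc (bandProj_inf_eq_zero hu hc h)

theorem bandProj_mul_self {u : L} (hu : 0 ≤ u) : bandProj u * bandProj u = bandProj u := by
  have h := bandProj_mul_eq_zero hu (sub_nonneg.2 (bandProj_le_one u))
    (by rw [inf_comm]; exact one_sub_bandProj_inf_eq_zero hu)
  rwa [mul_sub, mul_one, sub_eq_zero, eq_comm] at h

theorem bandProj_posPart_mul_nonneg (a : L) : 0 ≤ bandProj a⁺ * a := by
  have h := bandProj_mul_eq_zero (posPart_nonneg a) (negPart_nonneg a)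
    (posPart_inf_negPart_eq_zero a)
  calc 0 ≤ bandProj a⁺ * a⁺ := mul_nonneg (bandProj_nonneg _) (posPart_nonneg a)
    _ = bandProj a⁺ * (a⁺ - a⁻) := by rw [mul_sub, h, sub_zero]
    _ = bandProj a⁺ * a := by rw [posPart_sub_negPart]

theorem bandProj_posPart_sub_mul_le {a b : L} (ha : 0 ≤ a) : bandProj (a - b)⁺ * b ≤ a := by
  have h := bandProj_posPart_mul_nonneg (a - b)
  rw [mul_sub, sub_nonneg] at h
  exact h.trans ((mul_le_mul_of_nonneg_right (bandProj_le_one _) ha).trans_eq (one_mul a))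

theorem eq_zero_of_forall_inf_posPart_natCast_sub_eq_zero {c m : L} (hc : 0 ≤ c) (hm : 0 ≤ m)
    (h : ∀ n : ℕ, c ⊓ ((n : L) - m)⁺ = 0) : c = 0 := by
  set d := c ⊓ 1
  have hd : 0 ≤ d := le_inf hc zero_le_one
  have hshift (n : ℕ) : (d + m) ⊓ n ≤ m := by
    have : d ⊓ ((n : L) - m) ≤ 0 := (inf_le_inf inf_le_left (le_posPart _)).trans (h n).le
    simpa [inf_add] using add_le_add this (le_refl m)
  have hnsmul (n : ℕ) : n • d ≤ m := by
    induction n with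
    | zero => simpa using hm
    | succ n ih =>
      refine le_trans (le_inf ?_ ?_) (hshift (n + 1))
      · rw [succ_nsmul, add_comm d]; exact add_le_add ih le_rfl
      · rw [nsmul_eq_mul]; exact mul_le_of_le_one_right (Nat.cast_nonneg _) inf_le_right
  exact eq_zero_of_inf_one_eq_zero hc (eq_zero_of_nsmul_le hd hnsmul)

theorem isLUB_range_mul_of_forall_inf_posPart_eq_zero {π : ℕ → L} {m x : L} (hπ : ∀ n, π n ≤ 1)
    (hm : 0 ≤ m) (hdisj : ∀ n : ℕ, (1 - π n) ⊓ ((n : L) - m)⁺ = 0) (hx : 0 ≤ x) :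
    IsLUB (Set.range fun n => π n * x) x := by
  have hle (n : ℕ) : π n * x ≤ x := (mul_le_mul_of_nonneg_right (hπ n) hx).trans_eq (one_mul x)
  refine ⟨Set.forall_mem_range.2 hle, fun b hb => ?_⟩
  have hc : 0 ≤ x - b ⊓ x := sub_nonneg.2 inf_le_right
  suffices x - b ⊓ x = 0 from (sub_eq_zero.1 this).trans_le inf_le_left
  refine eq_zero_of_forall_inf_posPart_natCast_sub_eq_zero hc hm fun n =>
    le_antisymm ?_ (le_inf hc (posPart_nonneg _))
  have hrem : x - b ⊓ x ≤ x * (1 - π n) := calc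
    x - b ⊓ x ≤ x - π n * x := sub_le_sub_left (le_inf (hb ⟨n, rfl⟩) (hle n)) x
    _ = x * (1 - π n) := by ring
  exact (inf_le_inf_right _ hrem).trans (DFAlgebra.f_prop _ _ x (hdisj n) hx).le

end FAlgebra

/-- For every λ in a Dedekind complete unital f-algebra there is a sequence of
idempotents increasing to 1 on which λ is bounded; if λ ≥ 0 then π n * λ ↑ λ. -/
theorem stmt1 (L : Type*) [DFAlgebra L] (l : L) :
    ∃ π : ℕ → L,
      (∀ n, π n * π n = π n) ∧ Monotone π ∧ IsLUB (Set.range π) 1 ∧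
      (∀ n : ℕ, -(n : L) ≤ π n * l ∧ π n * l ≤ (n : L)) ∧
      (0 ≤ l → Monotone (fun n => π n * l) ∧ IsLUB (Set.range fun n => π n * l) l) := by
  set π : ℕ → L := fun n => bandProj (((n : L) - |l|)⁺)
  have hmono : Monotone π := fun a b hab =>
    bandProj_mono (posPart_mono (sub_le_sub_right (Nat.mono_cast hab) _))
  have hlub (x : L) : 0 ≤ x → IsLUB (Set.range fun n => π n * x) x :=
    isLUB_range_mul_of_forall_inf_posPart_eq_zero (fun _ => bandProj_le_one _) (abs_nonneg l)
      (fun _ => one_sub_bandProj_inf_eq_zero (posPart_nonneg _))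
  have hbound (n : ℕ) : π n * |l| ≤ n := bandProj_posPart_sub_mul_le n.cast_nonneg
  refine ⟨π, fun n => bandProj_mul_self (posPart_nonneg _), hmono,
    by simpa using hlub 1 zero_le_one, fun n => ⟨?_, ?_⟩,
    fun hl => ⟨fun a b hab => mul_le_mul_of_nonneg_right (hmono hab) hl, hlub l hl⟩⟩
  · rw [neg_le, ← mul_neg]
    exact (mul_le_mul_of_nonneg_left (neg_le_abs l) (bandProj_nonneg _)).trans (hbound n)
  · exact (mul_le_mul_of_nonneg_left (le_abs_self l) (bandProj_nonneg _)).trans (hbound n)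
end

section
/- Let L = ℓ^∞ and X = ℓ^∞/c₀ as an L-module. Then X is not support-attaining: the equivalence class x of the constant sequence 1 satisfies π_x = 0 but x ≠ 0, where π_x = inf{π idempotent in ℓ^∞ : πx = x}. -/
/-!
Idempotents of ℓ^∞ take values in {0, 1}, so they are nonnegative. Conversely, the indicator of
ℕ ∖ {k} differs from 1 only at k, hence fixes the class of 1 modulo c₀; a common lower bound of
all such idempotents is therefore ≤ 0 at every k.
-/

open Filter BoundedContinuousFunction

/-- The sequences converging to 0, as a submodule of ℓ^∞ = ℕ →ᵇ ℝ over itself. -/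
noncomputable def czero : Submodule (ℕ →ᵇ ℝ) (ℕ →ᵇ ℝ) where
  carrier := {f | Tendsto (fun n => f n) atTop (nhds 0)}
  zero_mem' := by simp only [Set.mem_setOf_eq]; exact (tendsto_const_nhds : Tendsto (fun _ : ℕ => (0 : ℝ)) atTop (nhds 0))
  add_mem' := by
    intro f g hf hg
    simpa using (hf.add hg)
  smul_mem' := by
    intro c f hf
    have h1 : Tendsto (fun n => ‖c‖ * ‖f n‖) atTop (nhds 0) := by
      simpa using hf.norm.const_mul ‖c‖
    have : Tendsto (fun n => c n * f n) atTop (nhds 0) := by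
      apply squeeze_zero_norm _ h1
      intro n
      calc ‖c n * f n‖ = ‖c n‖ * ‖f n‖ := norm_mul _ _
        _ ≤ ‖c‖ * ‖f n‖ :=
          mul_le_mul_of_nonneg_right (c.norm_coe_le_norm n) (norm_nonneg _)
    simpa [smul_eq_mul] using this

theorem mem_czero {f : ℕ →ᵇ ℝ} : f ∈ czero ↔ Tendsto (fun n => f n) atTop (nhds 0) := Iff.rfl

theorem czero_mk_eq_mk_of_eventuallyEq {f g : ℕ →ᵇ ℝ} (h : ⇑f =ᶠ[atTop] ⇑g) :
    Submodule.Quotient.mk (p := czero) f = Submodule.Quotient.mk g := by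
  rw [Submodule.Quotient.eq, mem_czero]
  refine tendsto_const_nhds.congr' ?_
  filter_upwards [h] with n hn
  simp [hn]

theorem czero_mk_one_ne_zero : Submodule.Quotient.mk (p := czero) (1 : ℕ →ᵇ ℝ) ≠ 0 := by
  rw [Ne, Submodule.Quotient.mk_eq_zero, mem_czero]
  intro h
  simp only [coe_one, Pi.one_apply] at h
  exact one_ne_zero (tendsto_nhds_unique tendsto_const_nhds h)

theorem nonneg_of_mul_self_eq {α : Type*} [TopologicalSpace α] {f : α →ᵇ ℝ} (hf : f * f = f) :
    0 ≤ f := fun x => by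
  rw [← hf]
  exact mul_self_nonneg (f x)

noncomputable def indicatorBCF (s : Set ℕ) : ℕ →ᵇ ℝ :=
  ofNormedAddCommGroupDiscrete (s.indicator 1) 1 fun k => by
    by_cases hk : k ∈ s <;> simp [hk]

@[simp]
theorem indicatorBCF_apply (s : Set ℕ) (k : ℕ) : indicatorBCF s k = s.indicator 1 k := rfl

theorem indicatorBCF_mul_self (s : Set ℕ) : indicatorBCF s * indicatorBCF s = indicatorBCF s := by
  ext k
  by_cases hk : k ∈ s <;> simp [hk]

theorem indicatorBCF_smul_czero_mk_one {s : Set ℕ} (hs : sᶜ.Finite) :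
    indicatorBCF s • Submodule.Quotient.mk (p := czero) (1 : ℕ →ᵇ ℝ) =
      Submodule.Quotient.mk 1 := by
  have hs' : s ∈ atTop := Nat.cofinite_eq_atTop ▸ mem_cofinite.2 hs
  rw [← Submodule.Quotient.mk_smul]
  refine czero_mk_eq_mk_of_eventuallyEq ?_
  filter_upwards [hs'] with k hk
  simp [hk]

/-- ℓ^∞/c₀ is not support-attaining: the class x of the constant sequence 1
satisfies π_x = 0 (the set of idempotents π with π x = x has infimum 0 in ℓ^∞)
yet x ≠ 0. -/
theorem stmt9 :
    (Submodule.Quotient.mk (p := czero) (1 : ℕ →ᵇ ℝ)) ≠ 0 ∧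
    IsGLB {π : ℕ →ᵇ ℝ | π * π = π ∧
        π • (Submodule.Quotient.mk (p := czero) (1 : ℕ →ᵇ ℝ)) =
          Submodule.Quotient.mk (p := czero) (1 : ℕ →ᵇ ℝ)} 0 := by
  refine ⟨czero_mk_one_ne_zero, fun π hπ => nonneg_of_mul_self_eq hπ.1, fun b hb k => ?_⟩
  have hk : b ≤ indicatorBCF {k}ᶜ :=
    hb ⟨indicatorBCF_mul_self _, indicatorBCF_smul_czero_mk_one (by simp)⟩
  simpa using hk k
end

section
/- Let X and Y be directed partially ordered L-modules over a Dedekind complete unital f-algebra L, with Y sequentially almost Archimedean, and let T : X⁺ → Y⁺ be additive (T(x+y) = T(x)+T(y)) and P-homogeneous (T(πx) = πT(x) for every idempotent π of L). Then T extends uniquely to a positive L-module homomorphism from X to Y. -/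
open Finset

theorem IsLUB.inf_const {α : Type*} [Lattice α] [AddCommGroup α] [IsOrderedAddMonoid α]
    {S : Set α} {a : α} (h : IsLUB S a) (c : α) : IsLUB ((· ⊓ c) '' S) (a ⊓ c) := by
  refine ⟨?_, fun b hb => ?_⟩
  · rintro _ ⟨s, hs, rfl⟩
    exact inf_le_inf_right c (h.1 hs)
  · -- `s ⊓ c + s ⊔ c = s + c` turns the bound on `s ⊓ c` into one on `s`
    have hsup : a ≤ b + a ⊔ c - c := h.2 fun s hs => by
      rw [le_sub_iff_add_le, ← inf_add_sup s c]
      exact add_le_add (hb ⟨s, hs, rfl⟩) (sup_le_sup_right (h.1 hs) c)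
    rw [← add_sub_cancel_right (a ⊓ c) (a ⊔ c), inf_add_sup, sub_le_iff_le_add]
    simpa [sub_add_cancel, add_comm] using add_le_add_right hsup c

structure IsIdempotentChain {R : Type*} [CommRing R] [PartialOrder R] (p : ℕ → R) : Prop where
  zero : p 0 = 1
  mul_of_le : ∀ {i j : ℕ}, i ≤ j → p i * p j = p j
  nonneg : ∀ i, 0 ≤ p i
  le_one : ∀ i, p i ≤ 1

namespace IsIdempotentChain

variable {R : Type*} [CommRing R] [PartialOrder R] {p : ℕ → R}

theorem sum_mul_sub_succ (hp : IsIdempotentChain p) {j K : ℕ} (hj : j ≤ K) :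
    (∑ k ∈ range K, p (k + 1)) * (p j - p (j + 1)) = j * (p j - p (j + 1)) := by
  have hbelow : ∀ k ∈ range j, p (k + 1) * (p j - p (j + 1)) = p j - p (j + 1) := fun k hk => by
    have hkj : k + 1 ≤ j := mem_range.mp hk
    rw [mul_sub, hp.mul_of_le hkj, hp.mul_of_le (hkj.trans j.le_succ)]
  have habove : ∀ k ∈ Ico j K, p (k + 1) * (p j - p (j + 1)) = 0 := fun k hk => by
    have hjk : j ≤ k := (mem_Ico.mp hk).1
    rw [mul_sub, mul_comm, hp.mul_of_le (hjk.trans k.le_succ), mul_comm,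
      hp.mul_of_le (Nat.succ_le_succ hjk), sub_self]
  rw [sum_mul, ← sum_range_add_sum_Ico _ hj, sum_congr rfl hbelow, sum_eq_zero habove, sum_const,
    card_range, nsmul_eq_mul, add_zero]

theorem sum_mul_self (hp : IsIdempotentChain p) (K : ℕ) :
    (∑ k ∈ range K, p (k + 1)) * p K = K * p K := by
  rw [sum_mul, sum_congr rfl fun k hk => hp.mul_of_le (mem_range.mp hk)]
  simp

theorem approx [IsOrderedRing R] {δ l : R} (hp : IsIdempotentChain p) {K : ℕ}
    (hlow : ∀ k : ℕ, 0 ≤ (l - k * δ) * p k)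
    (hup : ∀ k : ℕ, 0 ≤ (k * δ - l) * (1 - p k))
    (hK : l ≤ K * δ) (hδ : 0 ≤ δ) :
    δ * ∑ k ∈ range K, p (k + 1) ≤ l ∧ l ≤ δ * ∑ k ∈ range K, p (k + 1) + δ := by
  set s := ∑ k ∈ range K, p (k + 1)
  -- the pieces `p j - p (j + 1)` (`j < K`) and `p K` partition `1`, and `s` is constant on each
  have hdecomp (c : R) : c = ∑ j ∈ range K, c * (p j - p (j + 1)) + c * p K := by
    rw [← mul_sum, sum_range_sub', hp.zero]
    ring
  have hpiece (j : ℕ) : p j - p (j + 1) = p j * (1 - p (j + 1)) := by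
    rw [mul_sub, mul_one, hp.mul_of_le j.le_succ]
  constructor
  · rw [← sub_nonneg, hdecomp (l - δ * s)]
    refine add_nonneg (sum_nonneg fun j hj => ?_) ?_
    · calc 0 ≤ (l - j * δ) * p j * (1 - p (j + 1)) :=
            mul_nonneg (hlow j) (sub_nonneg.mpr (hp.le_one _))
        _ = (l - δ * s) * (p j - p (j + 1)) := by
          linear_combination
            -hpiece j * (l - j * δ) + δ * hp.sum_mul_sub_succ (mem_range.mp hj).le
    · calc 0 ≤ (l - K * δ) * p K := hlow K
        _ = (l - δ * s) * p K := by linear_combination δ * hp.sum_mul_self K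
  · rw [← sub_nonpos, hdecomp (l - (δ * s + δ))]
    refine add_nonpos (sum_nonpos fun j hj => ?_) ?_
    · calc (l - (δ * s + δ)) * (p j - p (j + 1))
            = -(p j * (((j + 1 : ℕ) * δ - l) * (1 - p (j + 1)))) := by
            push_cast
            linear_combination
              hpiece j * (l - (j + 1) * δ) - δ * hp.sum_mul_sub_succ (mem_range.mp hj).le
        _ ≤ 0 := neg_nonpos.mpr (mul_nonneg (hp.nonneg j) (hup (j + 1)))
    · calc (l - (δ * s + δ)) * p K = (l - K * δ) * p K - δ * p K := by
            linear_combination (-δ) * hp.sum_mul_self K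
        _ ≤ 0 := sub_nonpos.mpr <|
          (mul_nonpos_of_nonpos_of_nonneg (sub_nonpos.mpr hK) (hp.nonneg K)).trans
            (mul_nonneg hδ (hp.nonneg K))

end IsIdempotentChain

namespace DFAlgebra

variable {L : Type*} [DFAlgebra L]

instance : IsOrderedAddMonoid L where
  add_le_add_left a b h c := by
    simpa only [add_comm _ c] using DFAlgebra.add_le_add_left a b h c

instance : ZeroLEOneClass L where
  zero_le_one := by simpa using DFAlgebra.algebraMap_nonneg (L := L) 1 zero_le_one

instance : IsOrderedRing L := IsOrderedRing.of_mul_nonneg DFAlgebra.mul_nonneg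

theorem mul_eq_zero_of_inf_eq_zero {u v : L} (h : u ⊓ v = 0) : u * v = 0 := by
  have hu : 0 ≤ u := h ▸ inf_le_left
  have hv : 0 ≤ v := h ▸ inf_le_right
  have hvu : v ⊓ (v * u) = 0 := by rw [inf_comm]; exact f_prop u v v h hv
  simpa [mul_comm v u] using f_prop v (v * u) u hvu hu

theorem nonpos_of_forall_natCast_mul_le {b c : L} (h : ∀ n : ℕ, (n : L) * b ≤ c) :
    b ≤ 0 := by
  obtain ⟨a, ha⟩ := dedekind (Set.range fun n : ℕ => (n : L) * b) (Set.range_nonempty _)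
    ⟨c, by rintro _ ⟨n, rfl⟩; exact h n⟩
  have hab : a ≤ a - b := ha.2 <| by
    rintro _ ⟨n, rfl⟩
    refine le_sub_iff_add_le.mpr ?_
    simpa [add_mul] using ha.1 ⟨n + 1, rfl⟩
  simpa using hab

/-- The component of `1` in the band generated by `u`. -/
noncomputable def supportIdem (u : L) : L :=
  (dedekind (Set.range fun n : ℕ => 1 ⊓ (n : L) * u) (Set.range_nonempty _)
    ⟨1, by rintro _ ⟨n, rfl⟩; exact inf_le_left⟩).choose

theorem isLUB_supportIdem (u : L) :
    IsLUB (Set.range fun n : ℕ => 1 ⊓ (n : L) * u) (supportIdem u) :=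
  (dedekind (Set.range fun n : ℕ => 1 ⊓ (n : L) * u) (Set.range_nonempty _)
    ⟨1, by rintro _ ⟨n, rfl⟩; exact inf_le_left⟩).choose_spec

theorem inf_natCast_mul_le_supportIdem (u : L) (n : ℕ) : 1 ⊓ (n : L) * u ≤ supportIdem u :=
  (isLUB_supportIdem u).1 ⟨n, rfl⟩

theorem supportIdem_nonneg (u : L) : 0 ≤ supportIdem u := by
  simpa using inf_natCast_mul_le_supportIdem u 0

theorem supportIdem_le_one (u : L) : supportIdem u ≤ 1 :=
  (isLUB_supportIdem u).2 <| by rintro _ ⟨n, rfl⟩; exact inf_le_left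

theorem supportIdem_mono {u v : L} (h : u ≤ v) : supportIdem u ≤ supportIdem v :=
  (isLUB_supportIdem u).2 <| by
    rintro _ ⟨n, rfl⟩
    exact (inf_le_inf_left 1 (mul_le_mul_of_nonneg_left h n.cast_nonneg)).trans
      (inf_natCast_mul_le_supportIdem v n)

theorem one_sub_supportIdem_inf {u : L} (hu : 0 ≤ u) : (1 - supportIdem u) ⊓ u = 0 := by
  set e := supportIdem u
  set d := (1 - e) ⊓ u
  have hd : 0 ≤ d := le_inf (sub_nonneg.mpr (supportIdem_le_one u)) hu
  have hstep (n : ℕ) : 1 ⊓ (n : L) * u + d ≤ e := by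
    refine le_trans (le_inf ?_ ?_) (inf_natCast_mul_le_supportIdem u (n + 1))
    · calc 1 ⊓ (n : L) * u + d ≤ e + (1 - e) :=
            add_le_add (inf_natCast_mul_le_supportIdem u n) inf_le_left
        _ = 1 := add_sub_cancel e 1
    · calc 1 ⊓ (n : L) * u + d ≤ n * u + u := add_le_add inf_le_right inf_le_right
        _ = ((n + 1 : ℕ) : L) * u := by push_cast; ring
  have he : e ≤ e - d := (isLUB_supportIdem u).2 <| by
    rintro _ ⟨n, rfl⟩
    exact le_sub_iff_add_le.mpr (hstep n)
  exact le_antisymm (by simpa using he) hd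

theorem supportIdem_inf_eq_zero {u v : L} (h : u ⊓ v = 0) : supportIdem u ⊓ v = 0 := by
  have hv : 0 ≤ v := h ▸ inf_le_right
  refine le_antisymm (((isLUB_supportIdem u).inf_const v).2 ?_) (le_inf (supportIdem_nonneg u) hv)
  rintro _ ⟨_, ⟨n, rfl⟩, rfl⟩
  calc (1 ⊓ (n : L) * u) ⊓ v ≤ ((n : L) * u) ⊓ v := inf_le_inf_right v inf_le_right
    _ = 0 := f_prop u v n h n.cast_nonneg

theorem supportIdem_mul_of_le {u v : L} (hu : 0 ≤ u) (h : supportIdem v ≤ supportIdem u) :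
    supportIdem u * supportIdem v = supportIdem v := by
  have hdisj : (1 - supportIdem u) ⊓ supportIdem v = 0 := by
    refine le_antisymm ?_ (le_inf (sub_nonneg.mpr (supportIdem_le_one u)) (supportIdem_nonneg v))
    calc (1 - supportIdem u) ⊓ supportIdem v ≤ (1 - supportIdem u) ⊓ supportIdem u :=
          inf_le_inf_left _ h
      _ = 0 := by
        rw [inf_comm]
        exact supportIdem_inf_eq_zero (by rw [inf_comm]; exact one_sub_supportIdem_inf hu)
  linear_combination -mul_eq_zero_of_inf_eq_zero hdisj

/-- The idempotent of the band where `l > t`. -/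
noncomputable def levelIdem (l t : L) : L := supportIdem (l - t)⁺

theorem levelIdem_nonneg (l t : L) : 0 ≤ levelIdem l t := supportIdem_nonneg _

theorem levelIdem_le_one (l t : L) : levelIdem l t ≤ 1 := supportIdem_le_one _

theorem levelIdem_anti {l t s : L} (h : t ≤ s) : levelIdem l s ≤ levelIdem l t :=
  supportIdem_mono (posPart_mono (sub_le_sub_left h l))

theorem levelIdem_mul_of_le {l t s : L} (h : t ≤ s) :
    levelIdem l t * levelIdem l s = levelIdem l s :=
  supportIdem_mul_of_le (posPart_nonneg _) (levelIdem_anti h)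

theorem levelIdem_mul_self (l t : L) : levelIdem l t * levelIdem l t = levelIdem l t :=
  levelIdem_mul_of_le le_rfl

theorem sub_mul_levelIdem_nonneg (l t : L) : 0 ≤ (l - t) * levelIdem l t := by
  have hneg : levelIdem l t * (l - t)⁻ = 0 :=
    mul_eq_zero_of_inf_eq_zero (supportIdem_inf_eq_zero (posPart_inf_negPart_eq_zero _))
  calc 0 ≤ (l - t)⁺ * levelIdem l t :=
        _root_.mul_nonneg (posPart_nonneg _) (levelIdem_nonneg l t)
    _ = (l - t) * levelIdem l t := by
      conv_rhs => rw [← posPart_sub_negPart (l - t)]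
      linear_combination hneg

theorem sub_mul_one_sub_levelIdem_nonneg (l t : L) : 0 ≤ (t - l) * (1 - levelIdem l t) := by
  have hpos : (1 - levelIdem l t) * (l - t)⁺ = 0 :=
    mul_eq_zero_of_inf_eq_zero (one_sub_supportIdem_inf (posPart_nonneg _))
  calc 0 ≤ (l - t)⁻ * (1 - levelIdem l t) :=
        _root_.mul_nonneg (negPart_nonneg _) (sub_nonneg.mpr (levelIdem_le_one l t))
    _ = (t - l) * (1 - levelIdem l t) := by
      rw [← neg_sub l t]
      conv_rhs => rw [← posPart_sub_negPart (l - t)]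
      linear_combination hpos

noncomputable def stair (l δ : L) : ℕ → L
  | 0 => 1
  | k + 1 => levelIdem l ((k + 1 : ℕ) * δ)

theorem isIdempotentChain_stair (l : L) {δ : L} (hδ : 0 ≤ δ) :
    IsIdempotentChain (stair l δ) where
  zero := rfl
  mul_of_le := by
    rintro (_ | i) (_ | j) h
    · exact one_mul 1
    · exact one_mul _
    · omega
    · exact levelIdem_mul_of_le (mul_le_mul_of_nonneg_right (Nat.mono_cast h) hδ)
  nonneg := by
    rintro (_ | k)
    · exact zero_le_one
    · exact levelIdem_nonneg _ _
  le_one := by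
    rintro (_ | k)
    · exact le_rfl
    · exact levelIdem_le_one _ _

theorem exists_idempotent_sum_approx {l δ : L} (hl : 0 ≤ l) (hδ : 0 ≤ δ) {K : ℕ}
    (hK : l ≤ K * δ) :
    ∃ π : ℕ → L, (∀ k, π k * π k = π k ∧ 0 ≤ π k) ∧
      δ * ∑ k ∈ range K, π k ≤ l ∧ l ≤ δ * ∑ k ∈ range K, π k + δ := by
  have hchain := isIdempotentChain_stair l hδ
  refine ⟨fun k => stair l δ (k + 1), fun k => ⟨hchain.mul_of_le le_rfl, hchain.nonneg _⟩,
    hchain.approx (fun k => ?_) (fun k => ?_) hK hδ⟩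
  · cases k with
    | zero => simpa [stair] using hl
    | succ k => exact sub_mul_levelIdem_nonneg _ _
  · cases k with
    | zero => simp [stair]
    | succ k => exact sub_mul_one_sub_levelIdem_nonneg _ _

theorem mul_one_sub_levelIdem_le {l t : L} (ht : 0 ≤ t) : l * (1 - levelIdem l t) ≤ t := by
  have h := sub_mul_one_sub_levelIdem_nonneg l t
  rw [sub_mul, sub_nonneg] at h
  exact h.trans (mul_le_of_le_one_right ht (sub_le_self _ (levelIdem_nonneg l t)))

theorem isGLB_range_levelIdem_natCast {l : L} (hl : 0 ≤ l) :
    IsGLB (Set.range fun N : ℕ => levelIdem l N) 0 := by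
  refine ⟨by rintro _ ⟨N, rfl⟩; exact levelIdem_nonneg l N, fun b hb => ?_⟩
  refine nonpos_of_forall_natCast_mul_le (c := l) fun N => ?_
  have h := sub_mul_levelIdem_nonneg l N
  rw [sub_mul, sub_nonneg] at h
  calc (N : L) * b ≤ N * levelIdem l N :=
        mul_le_mul_of_nonneg_left (hb ⟨N, rfl⟩) N.cast_nonneg
    _ ≤ l * levelIdem l N := h
    _ ≤ l := mul_le_of_le_one_right hl (levelIdem_le_one l N)

noncomputable def invSucc (m : ℕ) : L := algebraMap ℝ L ((m : ℝ) + 1)⁻¹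

theorem invSucc_nonneg (m : ℕ) : 0 ≤ (invSucc m : L) :=
  algebraMap_nonneg _ (by positivity)

theorem natCast_succ_mul_invSucc (m : ℕ) : ((m + 1 : ℕ) : L) * invSucc m = 1 := by
  rw [invSucc, ← map_natCast (algebraMap ℝ L), ← map_mul, ← map_one (algebraMap ℝ L)]
  congr 1
  push_cast
  field_simp

theorem invSucc_antitone : Antitone (invSucc : ℕ → L) := fun m n h => by
  rw [← sub_nonneg, invSucc, invSucc, ← map_sub]
  refine algebraMap_nonneg _ (sub_nonneg.mpr ?_)
  gcongr

theorem isGLB_range_invSucc : IsGLB (Set.range (invSucc : ℕ → L)) 0 := by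
  refine ⟨by rintro _ ⟨m, rfl⟩; exact invSucc_nonneg m, fun b hb => ?_⟩
  refine nonpos_of_forall_natCast_mul_le (c := 1) fun n => ?_
  cases n with
  | zero => simp
  | succ m =>
    calc ((m + 1 : ℕ) : L) * b ≤ (m + 1 : ℕ) * invSucc m :=
          mul_le_mul_of_nonneg_left (hb ⟨m, rfl⟩) (Nat.cast_nonneg _)
      _ = 1 := natCast_succ_mul_invSucc m

end DFAlgebra

namespace POModule

variable {L : Type*} [DFAlgebra L] {X : Type*} [POModule L X]

instance : IsOrderedAddMonoid X where
  add_le_add_left a b h c := by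
    simpa only [add_comm _ c] using POModule.add_le_add_left a b h c

instance : PosSMulMono L X := ⟨fun l hl _ _ h => POModule.smul_le_smul l hl _ _ h⟩

end POModule

def IsAdditiveOnCone {X Y : Type*} [Add X] [Zero X] [LE X] [Add Y] (T : X → Y) : Prop :=
  ∀ x y : X, 0 ≤ x → 0 ≤ y → T (x + y) = T x + T y

namespace IsAdditiveOnCone

variable {X Y : Type*} [AddCommGroup X] [PartialOrder X] [AddCommGroup Y] {T : X → Y}

theorem map_zero (hT : IsAdditiveOnCone T) : T 0 = 0 := by
  simpa using hT 0 0 le_rfl le_rfl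

theorem map_sum [IsOrderedAddMonoid X] (hT : IsAdditiveOnCone T) {ι : Type*} (s : Finset ι)
    {f : ι → X} (hf : ∀ i ∈ s, 0 ≤ f i) : T (∑ i ∈ s, f i) = ∑ i ∈ s, T (f i) := by
  classical
  induction s using Finset.induction with
  | empty => simpa using hT.map_zero
  | insert i s hi ih =>
    rw [forall_mem_insert] at hf
    rw [sum_insert hi, sum_insert hi, hT _ _ hf.1 (sum_nonneg hf.2), ih hf.2]

theorem map_nsmul [IsOrderedAddMonoid X] (hT : IsAdditiveOnCone T) {x : X} (hx : 0 ≤ x) (n : ℕ) :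
    T (n • x) = n • T x := by
  simpa using hT.map_sum (range n) fun _ _ => hx

theorem map_sub_map_eq (hT : IsAdditiveOnCone T) {p q r s : X} (hp : 0 ≤ p) (hq : 0 ≤ q)
    (hr : 0 ≤ r) (hs : 0 ≤ s) (h : p - q = r - s) : T p - T q = T r - T s := by
  have h' : T (p + s) = T (r + q) := by rw [sub_eq_sub_iff_add_eq_add.mp h]
  rw [hT _ _ hp hs, hT _ _ hr hq] at h'
  exact sub_eq_sub_iff_add_eq_add.mpr h'

theorem monotoneOn [IsOrderedAddMonoid X] [PartialOrder Y] [IsOrderedAddMonoid Y]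
    (hT : IsAdditiveOnCone T) (hpos : ∀ x : X, 0 ≤ x → 0 ≤ T x) : MonotoneOn T (Set.Ici 0) :=
    fun a ha b _ hab => by
  have hba : 0 ≤ b - a := sub_nonneg.mpr hab
  calc T a ≤ T a + T (b - a) := le_add_of_nonneg_right (hpos _ hba)
    _ = T b := by rw [← hT _ _ ha hba, add_sub_cancel]

section Module

variable [IsOrderedAddMonoid X] {R : Type*} [Ring R] [PartialOrder R] [Module R X] [Module R Y]
  [PosSMulMono R X]

theorem map_smul_of_natCast_mul_eq_one (hT : IsAdditiveOnCone T) {c : R} {n : ℕ} (hc : 0 ≤ c)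
    (hcn : (n : R) * c = 1) {x : X} (hx : 0 ≤ x) : T (c • x) = c • T x := by
  have hx' : T x = n • T (c • x) := by
    rw [← hT.map_nsmul (smul_nonneg hc hx), ← Nat.cast_smul_eq_nsmul R, ← mul_smul, hcn,
      one_smul]
  rw [hx', ← Nat.cast_smul_eq_nsmul R, ← mul_smul, ← Nat.cast_comm, hcn, one_smul]

theorem neg_smul_le_map_smul_sub [PartialOrder Y] [IsOrderedAddMonoid Y] [PosSMulMono R Y]
    [IsOrderedRing R] (hT : IsAdditiveOnCone T) (hpos : ∀ x : X, 0 ≤ x → 0 ≤ T x)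
    {l s δ : R} (hs : 0 ≤ s) (hδ : 0 ≤ δ) (hsl : s ≤ l) (hls : l ≤ s + δ) {x : X}
    (hx : 0 ≤ x)    (hTs : T (s • x) = s • T x) (hTδ : T (δ • x) = δ • T x) :
    -(δ • T x) ≤ T (l • x) - l • T x ∧ T (l • x) - l • T x ≤ δ • T x := by
  have hsx : 0 ≤ s • x := smul_nonneg hs hx
  have hTx : 0 ≤ T x := hpos x hx
  have hT_lower : s • T x ≤ T (l • x) := by
    rw [← hTs]
    exact hT.monotoneOn hpos hsx (smul_nonneg (hs.trans hsl) hx)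
      (smul_le_smul_of_nonneg_right hsl hx)
  have hT_upper : T (l • x) ≤ s • T x + δ • T x := by
    rw [← hTs, ← hTδ, ← hT _ _ hsx (smul_nonneg hδ hx), ← add_smul]
    exact hT.monotoneOn hpos (smul_nonneg (hs.trans hsl) hx) (smul_nonneg (add_nonneg hs hδ) hx)
      (smul_le_smul_of_nonneg_right hls hx)
  have hl_lower : s • T x ≤ l • T x := smul_le_smul_of_nonneg_right hsl hTx
  have hl_upper : l • T x ≤ s • T x + δ • T x := by
    rw [← add_smul]
    exact smul_le_smul_of_nonneg_right hls hTx
  constructor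
  · rw [neg_le, neg_sub]
    simpa using sub_le_sub hl_upper hT_lower
  · simpa using sub_le_sub hT_upper hl_lower

end Module

end IsAdditiveOnCone

section Extension

variable {R X Y : Type*} [Ring R] [Lattice R] [IsOrderedAddMonoid R] [AddCommGroup X]
  [PartialOrder X] [IsOrderedAddMonoid X] [Module R X] [PosSMulMono R X] [AddCommGroup Y]
  [Module R Y]

theorem IsAdditiveOnCone.exists_linearMap_eqOn
    (hdir : ∀ x : X, ∃ a b : X, 0 ≤ a ∧ 0 ≤ b ∧ x = a - b) {T : X → Y}
    (hT : IsAdditiveOnCone T)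
    (hsmul : ∀ c : R, 0 ≤ c → ∀ x : X, 0 ≤ x → T (c • x) = c • T x) :
    ∃ S : X →ₗ[R] Y, ∀ x : X, 0 ≤ x → S x = T x := by
  choose a b ha hb hab using hdir
  have hwd {x p q : X} (hp : 0 ≤ p) (hq : 0 ≤ q) (h : x = p - q) :
      T (a x) - T (b x) = T p - T q :=
    hT.map_sub_map_eq (ha x) (hb x) hp hq (by rw [← hab x, h])
  refine ⟨{ toFun := fun x => T (a x) - T (b x)
            map_add' := fun x y => ?_
            map_smul' := fun c x => ?_ }, fun x hx => ?_⟩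
  · rw [hwd (add_nonneg (ha x) (ha y)) (add_nonneg (hb x) (hb y))
      (by conv_lhs => rw [hab x, hab y]
          abel), hT _ _ (ha x) (ha y), hT _ _ (hb x) (hb y)]
    abel
  · have h₁ : 0 ≤ c⁺ • a x := smul_nonneg (posPart_nonneg c) (ha x)
    have h₂ : 0 ≤ c⁻ • b x := smul_nonneg (negPart_nonneg c) (hb x)
    have h₃ : 0 ≤ c⁺ • b x := smul_nonneg (posPart_nonneg c) (hb x)
    have h₄ : 0 ≤ c⁻ • a x := smul_nonneg (negPart_nonneg c) (ha x)
    have hcx : c • x = (c⁺ • a x + c⁻ • b x) - (c⁺ • b x + c⁻ • a x) := by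
      conv_lhs => rw [hab x, ← posPart_sub_negPart c]
      simp only [sub_smul, smul_sub]
      abel
    simp only [RingHom.id_apply]
    rw [hwd (add_nonneg h₁ h₂) (add_nonneg h₃ h₄) hcx, hT _ _ h₁ h₂, hT _ _ h₃ h₄,
      hsmul _ (posPart_nonneg c) _ (ha x), hsmul _ (negPart_nonneg c) _ (hb x),
      hsmul _ (posPart_nonneg c) _ (hb x), hsmul _ (negPart_nonneg c) _ (ha x)]
    conv_rhs => rw [← posPart_sub_negPart c]
    simp only [sub_smul, smul_sub]
    abel
  · change T (a x) - T (b x) = T x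
    rw [hwd hx le_rfl (sub_zero x).symm, hT.map_zero, sub_zero]

omit [Lattice R] [IsOrderedAddMonoid R] [IsOrderedAddMonoid X] [PosSMulMono R X] in
theorem LinearMap.ext_of_eqOn_nonneg
    (hdir : ∀ x : X, ∃ a b : X, 0 ≤ a ∧ 0 ≤ b ∧ x = a - b) {S S' : X →ₗ[R] Y}
    (h : ∀ x : X, 0 ≤ x → S x = S' x) : S = S' := by
  ext x
  obtain ⟨a, b, ha, hb, rfl⟩ := hdir x
  rw [map_sub, map_sub, h a ha, h b hb]

end Extension

def SeqAlmostArchimedean (L Y : Type*) [DFAlgebra L] [POModule L Y] : Prop :=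
  ∀ l : ℕ → L, Antitone l → IsGLB (Set.range l) 0 →
    ∀ x y : Y, 0 ≤ x → (∀ n, -(l n • x) ≤ y ∧ y ≤ l n • x) → y = 0

section Homogeneity

variable {L X Y : Type*} [DFAlgebra L] [POModule L X] [POModule L Y]

theorem SeqAlmostArchimedean.eq_zero_of_one_sub_smul_eq_zero (hY : SeqAlmostArchimedean L Y)
    {e : ℕ → L} (he : Antitone e) (he0 : IsGLB (Set.range e) 0) {y z : Y} (hz : 0 ≤ z)
    (hyz : -z ≤ y ∧ y ≤ z) (hkill : ∀ n, (1 - e n) • y = 0) : y = 0 := by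
  refine hY e he he0 z y hz fun n => ?_
  have hen : 0 ≤ e n := he0.1 ⟨n, rfl⟩
  have hy : y = e n • y := by simpa [sub_smul, sub_eq_zero] using hkill n
  rw [hy, ← smul_neg]
  exact ⟨smul_le_smul_of_nonneg_left hyz.1 hen, smul_le_smul_of_nonneg_left hyz.2 hen⟩

namespace IsAdditiveOnCone

open DFAlgebra

variable {T : X → Y} (hY : SeqAlmostArchimedean L Y) (hT : IsAdditiveOnCone T)
  (hpos : ∀ x : X, 0 ≤ x → 0 ≤ T x)
  (hP : ∀ π : L, π * π = π → ∀ x : X, 0 ≤ x → T (π • x) = π • T x)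
include hY hT hpos hP

theorem map_smul_of_le_natCast {l : L} (hl : 0 ≤ l) {N : ℕ} (hN : l ≤ N) {x : X}
    (hx : 0 ≤ x) : T (l • x) = l • T x := by
  rw [← sub_eq_zero]
  refine hY invSucc invSucc_antitone isGLB_range_invSucc (T x) _ (hpos x hx) fun m => ?_
  have hinv {z : X} (hz : 0 ≤ z) : T ((invSucc m : L) • z) = (invSucc m : L) • T z :=
    hT.map_smul_of_natCast_mul_eq_one (invSucc_nonneg m) (natCast_succ_mul_invSucc m) hz
  have hK : l ≤ ((N * (m + 1) : ℕ) : L) * invSucc m := by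
    rwa [Nat.cast_mul, mul_assoc, natCast_succ_mul_invSucc, mul_one]
  obtain ⟨π, hπ, hlow, hhigh⟩ := exists_idempotent_sum_approx hl (invSucc_nonneg m) hK
  set K := N * (m + 1)
  have hπsum : 0 ≤ ∑ k ∈ range K, π k := sum_nonneg fun k _ => (hπ k).2
  have hTsum : T ((∑ k ∈ range K, π k) • x) = (∑ k ∈ range K, π k) • T x := by
    rw [sum_smul, hT.map_sum _ fun k _ => smul_nonneg (hπ k).2 hx, sum_smul]
    exact sum_congr rfl fun k _ => hP _ (hπ k).1 x hx
  refine hT.neg_smul_le_map_smul_sub hpos (mul_nonneg (invSucc_nonneg m) hπsum)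
    (invSucc_nonneg m) hlow hhigh hx ?_ (hinv hx)
  rw [mul_smul, hinv (smul_nonneg hπsum hx), hTsum, mul_smul]

theorem map_smul_of_nonneg {l : L} (hl : 0 ≤ l) {x : X} (hx : 0 ≤ x) :
    T (l • x) = l • T x := by
  have hTlx : 0 ≤ T (l • x) := hpos _ (smul_nonneg hl hx)
  have hlTx : 0 ≤ l • T x := smul_nonneg hl (hpos x hx)
  rw [← sub_eq_zero]
  refine hY.eq_zero_of_one_sub_smul_eq_zero (fun M N h => levelIdem_anti (Nat.mono_cast h))
    (isGLB_range_levelIdem_natCast hl) (add_nonneg hTlx hlTx) ⟨?_, ?_⟩ fun N => ?_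
  · rw [neg_le, neg_sub]
    exact (sub_le_self _ hTlx).trans (le_add_of_nonneg_left hTlx)
  · exact (sub_le_self _ hlTx).trans (le_add_of_nonneg_right hlTx)
  · set π := 1 - levelIdem l N
    have hπ : π * π = π := by linear_combination levelIdem_mul_self l N
    have hπl : 0 ≤ π * l := mul_nonneg (sub_nonneg.mpr (levelIdem_le_one l N)) hl
    have hbdd : π * l ≤ N := by rw [mul_comm]; exact mul_one_sub_levelIdem_le N.cast_nonneg
    rw [smul_sub, ← hP π hπ _ (smul_nonneg hl hx), smul_smul, smul_smul,
      hT.map_smul_of_le_natCast hY hpos hP hπl hbdd hx, sub_self]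

end IsAdditiveOnCone

end Homogeneity

theorem stmt10_general (L X Y : Type*) [DFAlgebra L] [POModule L X] [POModule L Y]
    (hXdir : ∀ x : X, ∃ a b : X, 0 ≤ a ∧ 0 ≤ b ∧ x = a - b)
    (hYarch : ∀ l : ℕ → L, Antitone l → IsGLB (Set.range l) 0 →
      ∀ x y : Y, 0 ≤ x → (∀ n, -(l n • x) ≤ y ∧ y ≤ l n • x) → y = 0)
    (T : X → Y)
    (hpos : ∀ x : X, 0 ≤ x → 0 ≤ T x)
    (hadd : ∀ x y : X, 0 ≤ x → 0 ≤ y → T (x + y) = T x + T y)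
    (hP : ∀ π : L, π * π = π → ∀ x : X, 0 ≤ x → T (π • x) = π • T x) :
    ∃! S : X →ₗ[L] Y,
      (∀ x : X, 0 ≤ x → S x = T x) ∧ (∀ x : X, 0 ≤ x → 0 ≤ S x) := by
  have hT : IsAdditiveOnCone T := hadd
  obtain ⟨S, hS⟩ := hT.exists_linearMap_eqOn hXdir fun c hc x hx =>
    hT.map_smul_of_nonneg hYarch hpos hP hc hx
  refine ⟨S, ⟨hS, fun x hx => hS x hx ▸ hpos x hx⟩, fun S' hS' => ?_⟩
  exact LinearMap.ext_of_eqOn_nonneg hXdir fun x hx => (hS'.1 x hx).trans (hS x hx).symm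

/-- Extension theorem: an additive P-homogeneous map between the positive cones
of directed PO L-modules, with Y sequentially almost Archimedean, extends
uniquely to a positive L-module homomorphism. -/
theorem stmt10 (L X Y : Type*) [DFAlgebra L] [POModule L X] [POModule L Y]
    (hXdir : ∀ x : X, ∃ a b : X, 0 ≤ a ∧ 0 ≤ b ∧ x = a - b)
    (hYdir : ∀ y : Y, ∃ a b : Y, 0 ≤ a ∧ 0 ≤ b ∧ y = a - b)
    (hYarch : ∀ l : ℕ → L, Antitone l → IsGLB (Set.range l) 0 →
      ∀ x y : Y, 0 ≤ x → (∀ n, -(l n • x) ≤ y ∧ y ≤ l n • x) → y = 0)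
    (T : X → Y)
    (hpos : ∀ x : X, 0 ≤ x → 0 ≤ T x)
    (hadd : ∀ x y : X, 0 ≤ x → 0 ≤ y → T (x + y) = T x + T y)
    (hP : ∀ π : L, π * π = π → ∀ x : X, 0 ≤ x → T (π • x) = π • T x) :
    ∃! S : X →ₗ[L] Y,
      (∀ x : X, 0 ≤ x → S x = T x) ∧ (∀ x : X, 0 ≤ x → 0 ≤ S x) :=
  stmt10_general L X Y hXdir hYarch T hpos hadd hP
end
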